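/- arXiv:2208.07494 — 3 statements merged into one kernel-verified Lean document; each statement's English description precedes it below -/
import Mathlib

section
/- For a Green biset functor A, the following are equivalent: (1) there exists an anti-involution ★ on A; (2) there exists an isomorphism of Green biset functors δ: A → A^op with δ^op = δ⁻¹; (3) there exists a k-linear functor •: P_A → (P_A)^op which is the identity on objects, satisfying (•)^op ∘ • = Id_{P_A} and such that T⁻¹ ∘ • commutes with all biset operations (i.e. A^op(x)∘(T⁻¹∘•) = (T⁻¹∘•)∘A(x) for all x ∈ B_k(L×K,H×G)), where T: P_{A^op} → (P_A)^op is the canonical isomorphism given by A(Iso(τ)). -/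
set_option autoImplicit false
set_option maxHeartbeats 400000

/-! # Bisets

An `(H,G)`-biset is modelled as a finite `(H × G)`-set, via the usual dictionary
`(h,g) • x = h · x · g⁻¹`. -/

structure Biset (H G : Type) [Group H] [Group G] : Type 1 where
  carrier : Type
  fin : Finite carrier
  smul : H × G → carrier → carrier
  one_smul' : ∀ x, smul 1 x = x
  mul_smul' : ∀ a b x, smul (a * b) x = smul a (smul b x)

namespace Biset

variable {G H K L : Type} [Group G] [Group H] [Group K] [Group L]

/-- An isomorphism of bisets: an equivariant bijection. -/
structure Iso (X Y : Biset H G) where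
  toEquiv : X.carrier ≃ Y.carrier
  equivariant : ∀ a x, toEquiv (X.smul a x) = Y.smul a (toEquiv x)

/-- The relation defining the composition `Y ∘ X = Y ×_H X`. -/
def compRel (Y : Biset K H) (X : Biset H G) :
    Y.carrier × X.carrier → Y.carrier × X.carrier → Prop := fun p q =>
  ∃ h : H, q.1 = Y.smul (1, h) p.1 ∧ q.2 = X.smul (h, 1) p.2

/-- Composition of bisets, `Y ∘ X = (Y × X)/H`. -/
def comp (Y : Biset K H) (X : Biset H G) : Biset K G where
  carrier := Quot (compRel Y X)
  fin := by
    have := Y.fin; have := X.fin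
    exact Finite.of_surjective (Quot.mk _) fun q => Quot.inductionOn q fun a => ⟨a, rfl⟩
  smul a := Quot.map (fun p => (Y.smul (a.1, 1) p.1, X.smul (1, a.2) p.2)) (by
    rintro ⟨y, x⟩ ⟨y', x'⟩ ⟨h, h1, h2⟩
    dsimp only at h1 h2
    refine ⟨h, ?_, ?_⟩
    · dsimp only
      rw [h1, ← Y.mul_smul', ← Y.mul_smul',
        show ((a.1, (1 : H)) : K × H) * (1, h) = ((1 : K), h) * (a.1, 1) by ext <;> simp]
    · dsimp only
      rw [h2, ← X.mul_smul', ← X.mul_smul',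
        show (((1 : H), a.2) : H × G) * (h, 1) = (h, (1 : G)) * (1, a.2) by ext <;> simp])
  one_smul' x := Quot.inductionOn x fun p => by
    show Quot.mk _ (Y.smul (1, 1) p.1, X.smul (1, 1) p.2) = Quot.mk _ p
    rw [show ((1, 1) : K × H) = 1 from rfl, show ((1, 1) : H × G) = 1 from rfl,
      Y.one_smul', X.one_smul']
  mul_smul' a b x := Quot.inductionOn x fun p => by
    show Quot.mk _ (Y.smul ((a * b).1, 1) p.1, X.smul (1, (a * b).2) p.2) = _
    have h1 : (((a * b).1, (1 : H)) : K × H) = (a.1, 1) * (b.1, 1) := by ext <;> simp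
    have h2 : (((1 : H), (a * b).2) : H × G) = (1, a.2) * (1, b.2) := by ext <;> simp
    rw [h1, h2, Y.mul_smul', X.mul_smul']
    rfl

/-- The biset built from two homomorphisms into a group `M`, with two-sided
multiplication action. -/
def ofHoms {M : Type} [Group M] [Finite M] (f : H →* M) (g : G →* M) : Biset H G where
  carrier := M
  fin := inferInstance
  smul a x := f a.1 * x * (g a.2)⁻¹
  one_smul' x := by simp
  mul_smul' a b x := by simp [mul_assoc]

/-- The induction biset `Ind(φ)` along `φ : G →* H`. -/
def ind {G H : Type} [Group G] [Group H] [Finite H] (φ : G →* H) : Biset H G :=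
  ofHoms (MonoidHom.id H) φ

/-- The restriction biset `Res(φ)` along `φ : G →* H`. -/
def res {G H : Type} [Group G] [Group H] [Finite H] (φ : G →* H) : Biset G H :=
  ofHoms φ (MonoidHom.id H)

/-- `Iso(φ)` for a group isomorphism `φ`. -/
def isoB {G H : Type} [Group G] [Group H] [Finite H] (e : G ≃* H) : Biset H G :=
  ind e.toMonoidHom

/-- The identity `(G,G)`-biset (the regular biset). -/
def idB (G : Type) [Group G] [Finite G] : Biset G G := ind (MonoidHom.id G)

/-- `→G` : the group `G` as a `(G × G, 1)`-biset. -/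
def arrow (G : Type) [Group G] [Finite G] : Biset (G × G) PUnit where
  carrier := G
  fin := inferInstance
  smul a x := a.1.1 * x * a.1.2⁻¹
  one_smul' x := by simp
  mul_smul' a b x := by simp [mul_assoc]

/-- An `(H,G)`-biset regarded as an `(H × G, 1)`-biset. -/
def oneSided (X : Biset H G) : Biset (H × G) PUnit where
  carrier := X.carrier
  fin := X.fin
  smul a x := X.smul a.1 x
  one_smul' := X.one_smul'
  mul_smul' a b x := X.mul_smul' a.1 b.1 x

/-- The opposite biset `X^op` of an `(H,G)`-biset: `g·x·h = h⁻¹ x g⁻¹`. -/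
def op (X : Biset H G) : Biset G H where
  carrier := X.carrier
  fin := X.fin
  smul a x := X.smul (a.2, a.1) x
  one_smul' := X.one_smul'
  mul_smul' a b x := X.mul_smul' (a.2, a.1) (b.2, b.1) x

/-- The biset `K × ←H × G` implementing composition in associated categories,
as a `(K × G, (K × H) × (H × G))`-biset. -/
def middle (K H G : Type) [Group K] [Group H] [Group G] [Finite K] [Finite H] [Finite G] :
    Biset (K × G) ((K × H) × (H × G)) where
  carrier := K × H × G
  fin := inferInstance
  smul a x :=
    (a.1.1 * x.1 * a.2.1.1⁻¹, a.2.1.2 * x.2.1 * a.2.2.1⁻¹, a.2.2.2 * x.2.2 * a.1.2⁻¹)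
  one_smul' x := by obtain ⟨x1, x2, x3⟩ := x; simp
  mul_smul' a b x := by
    obtain ⟨⟨k, g⟩, ⟨k', h₁⟩, ⟨h₂, g'⟩⟩ := a
    obtain ⟨⟨k2, g2⟩, ⟨k2', h₁2⟩, ⟨h₂2, g'2⟩⟩ := b
    obtain ⟨x1, x2, x3⟩ := x
    simp [mul_assoc]

/-- The biset `H × ←G` implementing the action of `Hom_{P_A}(G,H)` on `A(G)`,
as an `(H, (H × G) × G)`-biset. -/
def half (H G : Type) [Group H] [Group G] [Finite H] [Finite G] :
    Biset H ((H × G) × G) where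
  carrier := H × G
  fin := inferInstance
  smul a x := (a.1 * x.1 * a.2.1.1⁻¹, a.2.1.2 * x.2 * a.2.2⁻¹)
  one_smul' x := by obtain ⟨x1, x2⟩ := x; simp
  mul_smul' a b x := by
    obtain ⟨h, ⟨h', g₁⟩, g₂⟩ := a
    obtain ⟨h2, ⟨h'2, g₁2⟩, g₂2⟩ := b
    obtain ⟨x1, x2⟩ := x
    simp [mul_assoc]

/-- The biset `H × ←G × ←G × H`, as an
`(H × H, (H × G) × ((G × G) × (G × H)))`-biset. -/
def middle4 (H G : Type) [Group H] [Group G] [Finite H] [Finite G] :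
    Biset (H × H) ((H × G) × ((G × G) × (G × H))) where
  carrier := H × G × G × H
  fin := inferInstance
  smul a x :=
    (a.1.1 * x.1 * a.2.1.1⁻¹, a.2.1.2 * x.2.1 * a.2.2.1.1⁻¹,
      a.2.2.1.2 * x.2.2.1 * a.2.2.2.1⁻¹, a.2.2.2.2 * x.2.2.2 * a.1.2⁻¹)
  one_smul' x := by obtain ⟨x1, x2, x3, x4⟩ := x; simp
  mul_smul' a b x := by
    obtain ⟨⟨p, q⟩, ⟨h₁, g₁⟩, ⟨g₂, g₃⟩, ⟨g₄, h₂⟩⟩ := a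
    obtain ⟨⟨pb, qb⟩, ⟨h₁b, g₁b⟩, ⟨g₂b, g₃b⟩, ⟨g₄b, h₂b⟩⟩ := b
    obtain ⟨x1, x2, x3, x4⟩ := x
    simp [mul_assoc]

/-- External product of bisets. -/
def bprod (X : Biset H G) (Y : Biset L K) : Biset (H × L) (G × K) where
  carrier := X.carrier × Y.carrier
  fin := by have := X.fin; have := Y.fin; exact inferInstance
  smul a p := (X.smul (a.1.1, a.2.1) p.1, Y.smul (a.1.2, a.2.2) p.2)
  one_smul' p := by
    show (X.smul 1 p.1, Y.smul 1 p.2) = p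
    rw [X.one_smul', Y.one_smul']
  mul_smul' a b p := by
    show (X.smul ((a.1.1, a.2.1) * (b.1.1, b.2.1)) p.1,
          Y.smul ((a.1.2, a.2.2) * (b.1.2, b.2.2)) p.2) = _
    rw [X.mul_smul', Y.mul_smul']

/-- Disjoint union of bisets. -/
def bsum (X Y : Biset H G) : Biset H G where
  carrier := X.carrier ⊕ Y.carrier
  fin := by have := X.fin; have := Y.fin; exact inferInstance
  smul a p := Sum.map (X.smul a) (Y.smul a) p
  one_smul' p := by cases p <;> simp [Sum.map, X.one_smul', Y.one_smul']
  mul_smul' a b p := by cases p <;> simp [Sum.map, X.mul_smul', Y.mul_smul']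

end Biset

/-- The diagonal homomorphism `G →* G × G`. -/
def diagHom (G : Type) [Group G] : G →* G × G := (MonoidHom.id G).prod (MonoidHom.id G)

/-! # Green biset functors -/

/-- A Green biset functor over `k` (with domain all finite groups): a biset functor
with compatible `k`-algebra structures on evaluations, such that restrictions are
algebra homomorphisms and the Frobenius identities hold. -/
structure GreenBF (k : Type) [CommRing k] : Type 2 where
  obj : (G : Type) → [Group G] → [Fintype G] → Type
  ring : (G : Type) → [Group G] → [Fintype G] → Ring (obj G)
  alg : (G : Type) → [Group G] → [Fintype G] → haveI := ring G; Algebra k (obj G)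
  map : {G H : Type} → [Group G] → [Fintype G] → [Group H] → [Fintype H] →
    Biset H G → obj G → obj H
  map_add : ∀ {G H : Type} [Group G] [Fintype G] [Group H] [Fintype H]
    (X : Biset H G) (a b : obj G),
    haveI := ring G; haveI := ring H
    map X (a + b) = map X a + map X b
  map_smul : ∀ {G H : Type} [Group G] [Fintype G] [Group H] [Fintype H]
    (X : Biset H G) (c : k) (a : obj G),
    haveI := ring G; haveI := ring H; haveI := alg G; haveI := alg H
    map X (c • a) = c • map X a
  map_iso : ∀ {G H : Type} [Group G] [Fintype G] [Group H] [Fintype H]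
    (X Y : Biset H G), Biset.Iso X Y → ∀ a, map X a = map Y a
  map_id : ∀ {G : Type} [Group G] [Fintype G] (a : obj G), map (Biset.idB G) a = a
  map_comp : ∀ {G H K : Type} [Group G] [Fintype G] [Group H] [Fintype H]
    [Group K] [Fintype K] (Y : Biset K H) (X : Biset H G) (a : obj G),
    map (Y.comp X) a = map Y (map X a)
  map_bsum : ∀ {G H : Type} [Group G] [Fintype G] [Group H] [Fintype H]
    (X Y : Biset H G) (a : obj G),
    haveI := ring H
    map (X.bsum Y) a = map X a + map Y a
  res_mul : ∀ {G H : Type} [Group G] [Fintype G] [Group H] [Fintype H]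
    (φ : G →* H) (a b : obj H),
    haveI := ring G; haveI := ring H
    map (Biset.res φ) (a * b) = map (Biset.res φ) a * map (Biset.res φ) b
  res_one : ∀ {G H : Type} [Group G] [Fintype G] [Group H] [Fintype H] (φ : G →* H),
    haveI := ring G; haveI := ring H
    map (Biset.res φ) (1 : obj H) = 1
  frob1 : ∀ {G H : Type} [Group G] [Fintype G] [Group H] [Fintype H]
    (φ : G →* H) (a : obj H) (b : obj G),
    haveI := ring G; haveI := ring H
    a * map (Biset.ind φ) b = map (Biset.ind φ) (map (Biset.res φ) a * b)
  frob2 : ∀ {G H : Type} [Group G] [Fintype G] [Group H] [Fintype H]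
    (φ : G →* H) (a : obj H) (b : obj G),
    haveI := ring G; haveI := ring H
    map (Biset.ind φ) b * a = map (Biset.ind φ) (b * map (Biset.res φ) a)

namespace GreenBF

variable {k : Type} [CommRing k]

/-- The identity element `ε_A ∈ A(1)`. -/
def one1 (A : GreenBF k) : A.obj PUnit := haveI := A.ring PUnit; 1

/-- The external (bilinear) product `a × b ∈ A(G × H)`. -/
def xprod (A : GreenBF k) {G H : Type} [Group G] [Fintype G] [Group H] [Fintype H]
    (a : A.obj G) (b : A.obj H) : A.obj (G × H) :=
  haveI := A.ring (G × H)
  A.map (Biset.res (MonoidHom.fst G H)) a * A.map (Biset.res (MonoidHom.snd G H)) b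

/-- Composition in the associated category `P_A` :
`Hom(G,H) = A(H × G)`, `α ∘ β = A(K×←H×G)(α × β)`. -/
def pcomp (A : GreenBF k) {G H K : Type} [Group G] [Fintype G] [Group H] [Fintype H]
    [Group K] [Fintype K] (α : A.obj (K × H)) (β : A.obj (H × G)) : A.obj (K × G) :=
  A.map (Biset.middle K H G) (A.xprod α β)

/-- The identity morphism of `G` in `P_A` : `Id_G = A(→G)(ε_A)`. -/
def catId (A : GreenBF k) (G : Type) [Group G] [Fintype G] : A.obj (G × G) :=
  A.map (Biset.arrow G) A.one1

/-- The tilde map `ã = A(Ind Δ)(a) ∈ End_{P_A}(G)`. -/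
def tilde (A : GreenBF k) {G : Type} [Group G] [Fintype G] (a : A.obj G) : A.obj (G × G) :=
  A.map (Biset.ind (diagHom G)) a

/-- The image `e_{H×G}(→x) ∈ A(H × G)` of a biset under the initial morphism from
the Burnside functor. -/
def bsElt (A : GreenBF k) {G H : Type} [Group G] [Fintype G] [Group H] [Fintype H]
    (x : Biset H G) : A.obj (H × G) :=
  A.map x.oneSided A.one1

/-- The functor of double algebras: `E_A(x)(α) = e(→x) ∘ α ∘ e(→x^op)`. -/
def EA (A : GreenBF k) {G H : Type} [Group G] [Fintype G] [Group H] [Fintype H]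
    (x : Biset H G) (α : A.obj (G × G)) : A.obj (H × H) :=
  A.pcomp (A.bsElt x) (A.pcomp α (A.bsElt x.op))

/-- The action of `Hom_{P_A}(G,H) = A(H × G)` on `A(G)` : `A(α)(b)`. -/
def actOn (A : GreenBF k) {G H : Type} [Group G] [Fintype G] [Group H] [Fintype H]
    (α : A.obj (H × G)) (b : A.obj G) : A.obj H :=
  A.map (Biset.half H G) (A.xprod α b)

/-- The generalized inflation of endomorphisms
`ω ↦ Id_G + E_A(Inf)(ω − Id_Q)` along `π : G →* Q`. -/
def dAInf (A : GreenBF k) {G Q : Type} [Group G] [Fintype G] [Group Q] [Fintype Q]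
    (π : G →* Q) (ω : A.obj (Q × Q)) : A.obj (G × G) :=
  haveI := A.ring (G × G); haveI := A.ring (Q × Q)
  A.catId G + A.EA (Biset.res π) (ω - A.catId Q)

/-- An endomorphism `α ∈ End_{P_A}(G)`... more generally a morphism in `P_A` which is
an isomorphism. -/
def IsIsoP (A : GreenBF k) {G H : Type} [Group G] [Fintype G] [Group H] [Fintype H]
    (ω : A.obj (H × G)) : Prop :=
  ∃ ω' : A.obj (G × H), A.pcomp ω ω' = A.catId H ∧ A.pcomp ω' ω = A.catId G

/-- The opposite Green biset functor `A^op`. -/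
def opp (A : GreenBF k) : GreenBF k where
  obj G := (A.obj G)ᵐᵒᵖ
  ring G := letI := A.ring G; inferInstance
  alg G := letI := A.ring G; letI := A.alg G; inferInstance
  map X a := MulOpposite.op (A.map X a.unop)
  map_add := by
    intro G H _ _ _ _ X a b
    letI := A.ring G; letI := A.ring H
    apply MulOpposite.unop_injective
    exact A.map_add X a.unop b.unop
  map_smul := by
    intro G H _ _ _ _ X c a
    letI := A.ring G; letI := A.ring H; letI := A.alg G; letI := A.alg H
    apply MulOpposite.unop_injective
    exact A.map_smul X c a.unop
  map_iso := by
    intro G H _ _ _ _ X Y e a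
    exact congrArg MulOpposite.op (A.map_iso X Y e a.unop)
  map_id := by
    intro G _ _ a
    apply MulOpposite.unop_injective
    exact A.map_id a.unop
  map_comp := by
    intro G H K _ _ _ _ _ _ Y X a
    exact congrArg MulOpposite.op (A.map_comp Y X a.unop)
  map_bsum := by
    intro G H _ _ _ _ X Y a
    letI := A.ring H
    apply MulOpposite.unop_injective
    exact A.map_bsum X Y a.unop
  res_mul := by
    intro G H _ _ _ _ φ a b
    letI := A.ring G; letI := A.ring H
    apply MulOpposite.unop_injective
    exact A.res_mul φ b.unop a.unop
  res_one := by
    intro G H _ _ _ _ φ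
    letI := A.ring G; letI := A.ring H
    apply MulOpposite.unop_injective
    exact A.res_one φ
  frob1 := by
    intro G H _ _ _ _ φ a b
    letI := A.ring G; letI := A.ring H
    apply MulOpposite.unop_injective
    exact A.frob2 φ a.unop b.unop
  frob2 := by
    intro G H _ _ _ _ φ a b
    letI := A.ring G; letI := A.ring H
    apply MulOpposite.unop_injective
    exact A.frob1 φ a.unop b.unop

end GreenBF

/-- A morphism of Green biset functors. -/
structure GreenHom {k : Type} [CommRing k] (A C : GreenBF k) : Type 1 where
  app : ∀ (G : Type) [Group G] [Fintype G], A.obj G → C.obj G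
  natural : ∀ {G H : Type} [Group G] [Fintype G] [Group H] [Fintype H]
    (X : Biset H G) (a : A.obj G), app H (A.map X a) = C.map X (app G a)
  app_add : ∀ (G : Type) [Group G] [Fintype G] (a b : A.obj G),
    haveI := A.ring G; haveI := C.ring G
    app G (a + b) = app G a + app G b
  app_smul : ∀ (G : Type) [Group G] [Fintype G] (c : k) (a : A.obj G),
    haveI := A.ring G; haveI := C.ring G; haveI := A.alg G; haveI := C.alg G
    app G (c • a) = c • app G a
  app_mul : ∀ (G : Type) [Group G] [Fintype G] (a b : A.obj G),
    haveI := A.ring G; haveI := C.ring G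
    app G (a * b) = app G a * app G b
  app_one : ∀ (G : Type) [Group G] [Fintype G],
    haveI := A.ring G; haveI := C.ring G
    app G (1 : A.obj G) = 1

/-- An anti-involution on a Green biset functor: a biset functor endomorphism with
`a★★ = a` and `(ab)★ = b★ a★`. -/
structure AntiInvol {k : Type} [CommRing k] (A : GreenBF k) : Type 1 where
  app : ∀ (G : Type) [Group G] [Fintype G], A.obj G → A.obj G
  natural : ∀ {G H : Type} [Group G] [Fintype G] [Group H] [Fintype H]
    (X : Biset H G) (a : A.obj G), app H (A.map X a) = A.map X (app G a)
  app_add : ∀ (G : Type) [Group G] [Fintype G] (a b : A.obj G),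
    haveI := A.ring G
    app G (a + b) = app G a + app G b
  app_smul : ∀ (G : Type) [Group G] [Fintype G] (c : k) (a : A.obj G),
    haveI := A.ring G; haveI := A.alg G
    app G (c • a) = c • app G a
  invol : ∀ (G : Type) [Group G] [Fintype G] (a : A.obj G), app G (app G a) = a
  anti : ∀ (G : Type) [Group G] [Fintype G] (a b : A.obj G),
    haveI := A.ring G
    app G (a * b) = app G b * app G a

namespace GreenBF

variable {k : Type} [CommRing k]

/-- The duality `_^• = T ∘ P_δ` on the associated category induced by an
anti-involution: `α^• = A(Iso τ)(α★)`. -/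
def bull (A : GreenBF k) (s : AntiInvol A) {G H : Type} [Group G] [Fintype G]
    [Group H] [Fintype H] (α : A.obj (H × G)) : A.obj (G × H) :=
  A.map (Biset.isoB (MulEquiv.prodComm : H × G ≃* G × H)) (s.app (H × G) α)

/-- An orthogonal isomorphism in `P_A` : `ω^• = ω⁻¹`. -/
def IsOrthIso (A : GreenBF k) (s : AntiInvol A) {G H : Type} [Group G] [Fintype G]
    [Group H] [Fintype H] (ω : A.obj (H × G)) : Prop :=
  A.pcomp ω (A.bull s ω) = A.catId H ∧ A.pcomp (A.bull s ω) ω = A.catId G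

end GreenBF


/-! ## Auxiliary infrastructure -/

namespace Biset

variable {G G' H H' K L M N R V : Type} [Group G] [Group G'] [Group H] [Group H'] [Group K]
  [Group L] [Group M] [Group N] [Group R] [Group V]

/-- Transport the right action along a homomorphism. -/
def rmapHom (X : Biset H G) (ψ : G' →* G) : Biset H G' where
  carrier := X.carrier
  fin := X.fin
  smul a x := X.smul (a.1, ψ a.2) x
  one_smul' x := by
    have h : (((1 : H × G').1 : H), ψ (1 : H × G').2) = (1 : H × G) := by simp
    rw [h, X.one_smul']
  mul_smul' a b x := by
    have h : (((a * b).1 : H), ψ ((a * b).2)) = ((a.1, ψ a.2) * (b.1, ψ b.2) : H × G) := by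
      simp [Prod.ext_iff]
    rw [h, X.mul_smul']

/-- Transport the left action along an isomorphism. -/
def lmap (X : Biset H G) (e : H ≃* H') : Biset H' G where
  carrier := X.carrier
  fin := X.fin
  smul a x := X.smul (e.symm a.1, a.2) x
  one_smul' x := by
    have h : (e.symm ((1 : H' × G).1), ((1 : H' × G).2 : G)) = (1 : H × G) := by simp
    rw [h, X.one_smul']
  mul_smul' a b x := by
    have h : (e.symm ((a * b).1), (((a * b).2 : G))) = ((e.symm a.1, a.2) * (e.symm b.1, b.2) : H × G) := by
      simp [Prod.ext_iff]
    rw [h, X.mul_smul']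

/-- Inverse of a biset isomorphism. -/
def Iso.inv {X Y : Biset H G} (i : Iso X Y) : Iso Y X where
  toEquiv := i.toEquiv.symm
  equivariant a y := by
    apply i.toEquiv.injective
    rw [i.equivariant, Equiv.apply_symm_apply, Equiv.apply_symm_apply]

/-- Composing with `Ind ψ` on the right is transport of the right action. -/
def isoCompInd [Finite G] (X : Biset H G) (ψ : G' →* G) :
    Iso (X.comp (Biset.ind ψ)) (X.rmapHom ψ) where
  toEquiv :=
  { toFun := Quot.lift (fun p => X.smul (1, p.2⁻¹) p.1) (by
      rintro ⟨x, g⟩ ⟨x', g'⟩ ⟨h, h1, h2⟩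
      change G at g g'
      dsimp only [ind, ofHoms] at h1 h2 ⊢
      rw [h1, h2, ← X.mul_smul']
      congr 1
      simp [Prod.ext_iff, mul_assoc])
    invFun := fun x => Quot.mk _ (x, (1 : G))
    left_inv := by
      intro q
      refine Quot.inductionOn q ?_
      rintro ⟨x, g⟩
      dsimp only
      refine (Quot.sound ?_).symm
      refine ⟨g⁻¹, rfl, ?_⟩
      change G at g
      dsimp only [ind, ofHoms]
      simp
    right_inv := by
      intro x
      dsimp only
      have h : ((1 : H), ((1 : G))⁻¹) = (1 : H × G) := by simp
      change X.carrier at x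
      show X.smul (1, (1 : G)⁻¹) x = x
      rw [h, X.one_smul'] }
  equivariant a q := by
    refine Quot.inductionOn q ?_
    rintro ⟨x, g⟩
    change G at g
    show X.smul (1, ((MonoidHom.id G) 1 * g * (ψ a.2)⁻¹)⁻¹) (X.smul (a.1, 1) x)
        = X.smul (a.1, ψ a.2) (X.smul (1, g⁻¹) x)
    rw [← X.mul_smul', ← X.mul_smul']
    congr 1
    simp [Prod.ext_iff, mul_assoc]

/-- Composing with `Iso e` on the left is transport of the left action. -/
def isoCompIsoB [Finite H'] (e : H ≃* H') (X : Biset H G) :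
    Iso ((Biset.isoB e).comp X) (X.lmap e) where
  toEquiv :=
  { toFun := Quot.lift (fun p => X.smul (e.symm p.1, 1) p.2) (by
      rintro ⟨y, x⟩ ⟨y', x'⟩ ⟨h, h1, h2⟩
      change H' at y y'
      dsimp only [isoB, ind, ofHoms] at h1 h2 ⊢
      rw [h1, h2, ← X.mul_smul']
      congr 1
      simp [Prod.ext_iff, mul_assoc])
    invFun := fun x => Quot.mk _ ((1 : H'), x)
    left_inv := by
      intro q
      refine Quot.inductionOn q ?_
      rintro ⟨y, x⟩
      dsimp only
      refine (Quot.sound ?_).symm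
      refine ⟨e.symm y, ?_, rfl⟩
      change H' at y
      dsimp only [isoB, ind, ofHoms]
      simp
    right_inv := by
      intro x
      dsimp only
      have h : (e.symm (1 : H'), (1 : G)) = (1 : H × G) := by simp
      change X.carrier at x
      show X.smul (e.symm (1 : H'), (1 : G)) x = x
      rw [h, X.one_smul'] }
  equivariant a q := by
    refine Quot.inductionOn q ?_
    rintro ⟨y, x⟩
    change H' at y
    show X.smul (e.symm ((MonoidHom.id H') a.1 * y * (e.toMonoidHom 1)⁻¹), 1) (X.smul (1, a.2) x)
        = X.smul (e.symm a.1, a.2) (X.smul (e.symm y, 1) x)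
    rw [← X.mul_smul', ← X.mul_smul']
    congr 1
    simp [Prod.ext_iff, mul_assoc]

/-- `(Res f) ∘ (ofHoms f' g') ≅ ofHoms (f' ∘ f) g'`. -/
def isoGenOf [Finite H] [Finite M] (f : K →* H) (f' : H →* M) (g' : G →* M) :
    Iso ((Biset.res f).comp (ofHoms f' g')) (ofHoms (f'.comp f) g') where
  toEquiv :=
  { toFun := Quot.lift (fun p => f' p.1 * (show M from p.2)) (by
      rintro ⟨x, m⟩ ⟨x', m'⟩ ⟨h, h1, h2⟩
      change H at x x'
      change M at m m'
      dsimp only [res, ofHoms] at h1 h2 ⊢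
      rw [h1, h2]
      simp [mul_assoc])
    invFun := fun m => Quot.mk _ ((1 : H), m)
    left_inv := by
      intro q
      refine Quot.inductionOn q ?_
      rintro ⟨x, m⟩
      change H at x
      change M at m
      refine (Quot.sound ?_).symm
      refine ⟨x, ?_, ?_⟩
      · show (1 : H) = f 1 * x * ((MonoidHom.id H) x)⁻¹
        simp
      · show f' x * m = f' x * m * (g' 1)⁻¹
        simp
    right_inv := by
      intro m
      change M at m
      show f' 1 * m = m
      simp }
  equivariant a q := by
    refine Quot.inductionOn q ?_
    rintro ⟨x, m⟩
    change H at x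
    change M at m
    show f' (f a.1 * x * ((MonoidHom.id H) 1)⁻¹) * (f' 1 * m * (g' a.2)⁻¹)
        = (f'.comp f) a.1 * (f' x * m) * (g' a.2)⁻¹
    simp [mul_assoc]

/-- `Ind ξ ∘ Res ν ≅ ofHoms f g` when `(ξ, ν) : V → L ×_M R` is a pullback datum. -/
noncomputable def isoIndRes [Finite L] [Finite R] [Finite M]
    (f : L →* M) (g : R →* M) (ξ : V →* L) (ν : V →* R)
    (h1 : ∀ v, f (ξ v) = g (ν v))
    (h2 : ∀ m, ∃ l r, f l * g r = m)
    (h3 : ∀ l r, f l = g r → ∃ v, ξ v = l ∧ ν v = r) :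
    Iso ((Biset.ind ξ).comp (Biset.res ν)) (ofHoms f g) where
  toEquiv := by
    refine Equiv.ofBijective (Quot.lift (fun p => f (show L from p.1) * g (show R from p.2)) ?_) ⟨?_, ?_⟩
    · rintro ⟨l, r⟩ ⟨l', r'⟩ ⟨v, hv1, hv2⟩
      change L at l l'
      change R at r r'
      dsimp only [ind, res, ofHoms] at hv1 hv2 ⊢
      rw [hv1, hv2]
      simp only [map_mul, map_inv, map_one, MonoidHom.id_apply, one_mul, mul_one, inv_one]
      rw [h1 v]
      group
    · intro p q
      refine Quot.inductionOn p fun a => Quot.inductionOn q fun b => ?_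
      intro hab
      obtain ⟨l, r⟩ := a
      obtain ⟨l', r'⟩ := b
      change L at l; change L at l'; change R at r; change R at r'
      change f l * g r = f l' * g r' at hab
      have key : f (l'⁻¹ * l) = g (r' * r⁻¹) := by
        have h4 : f l' * ((f l')⁻¹ * f l) * g r = f l' * (g r' * (g r)⁻¹) * g r := by
          calc f l' * ((f l')⁻¹ * f l) * g r = f l * g r := by group
          _ = f l' * g r' := hab
          _ = f l' * (g r' * (g r)⁻¹) * g r := by group
        have h5 := mul_left_cancel (mul_right_cancel h4)
        rw [map_mul, map_mul, map_inv, map_inv]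
        exact h5
      obtain ⟨v, hv1, hv2⟩ := h3 _ _ key
      refine Quot.sound ⟨v, ?_, ?_⟩
      · dsimp only [ind, res, ofHoms]
        rw [hv1]
        simp only [map_one, MonoidHom.id_apply, one_mul, inv_one, mul_one]
        group
      · dsimp only [ind, res, ofHoms]
        rw [hv2]
        simp only [map_one, MonoidHom.id_apply, one_mul, inv_one, mul_one]
        group
    · intro m
      obtain ⟨l, r, hlr⟩ := h2 m
      exact ⟨Quot.mk _ (l, r), hlr⟩
  equivariant a q := by
    refine Quot.inductionOn q ?_
    rintro ⟨l, r⟩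
    change L at l; change R at r
    show f ((MonoidHom.id L) a.1 * l * (ξ 1)⁻¹) * g (ν 1 * r * ((MonoidHom.id R) a.2)⁻¹)
        = f a.1 * (f l * g r) * (g a.2)⁻¹
    simp [mul_assoc]

/-- `Iso e ≅ Res e.symm`. -/
def isoIsoBRes [Finite H] [Finite G] (e : G ≃* H) :
    Iso (Biset.isoB e) (Biset.res e.symm.toMonoidHom) where
  toEquiv := e.symm.toEquiv
  equivariant a x := by
    change H at x
    dsimp only [isoB, ind, res, ofHoms]
    show e.symm (a.1 * x * (e a.2)⁻¹) = e.symm a.1 * e.symm x * a.2⁻¹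
    simp

end Biset


/-! ### Functor-level toolkit -/

namespace GreenBF

variable {k : Type} [CommRing k] (A : GreenBF k)

section toolkit

variable {G G' H H' K : Type} [Group G] [Fintype G] [Group G'] [Fintype G']
  [Group H] [Fintype H] [Group H'] [Fintype H'] [Group K] [Fintype K]

lemma map_map (Y : Biset H G') (X : Biset G' G) (a : A.obj G) :
    A.map Y (A.map X a) = A.map (Y.comp X) a := (A.map_comp Y X a).symm

lemma map_isoB_right (X : Biset H G) (e : G' ≃* G) (u : A.obj G') :
    A.map X (A.map (Biset.isoB e) u) = A.map (X.rmapHom e.toMonoidHom) u :=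
  (A.map_map X _ u).trans (A.map_iso _ _ (Biset.isoCompInd X e.toMonoidHom) u)

lemma map_isoB_left (e : G' ≃* H) (X : Biset G' G) (u : A.obj G) :
    A.map (Biset.isoB e) (A.map X u) = A.map (X.lmap e) u :=
  (A.map_map _ X u).trans (A.map_iso _ _ (Biset.isoCompIsoB e X) u)

lemma mapIsoB_mul (e : G ≃* H) (x y : A.obj G) :
    haveI := A.ring G; haveI := A.ring H
    A.map (Biset.isoB e) (x * y) = A.map (Biset.isoB e) x * A.map (Biset.isoB e) y := by
  letI := A.ring G; letI := A.ring H
  rw [A.map_iso _ _ (Biset.isoIsoBRes e), A.map_iso _ _ (Biset.isoIsoBRes e) x,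
    A.map_iso _ _ (Biset.isoIsoBRes e) y, A.res_mul]

lemma mapIsoB_comp (e₁ : G ≃* H) (e₂ : H ≃* K) (e₃ : G ≃* K)
    (hc : ∀ g, e₂ (e₁ g) = e₃ g) (a : A.obj G) :
    A.map (Biset.isoB e₂) (A.map (Biset.isoB e₁) a) = A.map (Biset.isoB e₃) a := by
  rw [A.map_isoB_right _ e₁ a]
  refine A.map_iso _ _ ?_ a
  refine ⟨Equiv.refl K, ?_⟩
  intro b x
  change K at x
  show (MonoidHom.id K) b.1 * x * (e₂.toMonoidHom (e₁.toMonoidHom b.2))⁻¹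
      = (MonoidHom.id K) b.1 * x * (e₃.toMonoidHom b.2)⁻¹
  simp [hc]

lemma mapIsoB_cancel (e : G ≃* H) (e' : H ≃* G) (hc : ∀ g, e' (e g) = g) (a : A.obj G) :
    A.map (Biset.isoB e') (A.map (Biset.isoB e) a) = a := by
  rw [A.mapIsoB_comp e e' (MulEquiv.refl G) hc a]
  have h : A.map (Biset.isoB (MulEquiv.refl G)) a = A.map (Biset.idB G) a := by
    refine A.map_iso _ _ ⟨Equiv.refl G, ?_⟩ a
    intro b x
    change G at x
    show (MonoidHom.id G) b.1 * x * ((MulEquiv.refl G).toMonoidHom b.2)⁻¹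
        = (MonoidHom.id G) b.1 * x * ((MonoidHom.id G) b.2)⁻¹
    simp
  rw [h, A.map_id]

lemma map_res_id (a : A.obj G) : A.map (Biset.res (MonoidHom.id G)) a = a := by
  rw [show Biset.res (MonoidHom.id G) = Biset.idB G from rfl, A.map_id]

lemma res_res (φ : G →* H) (ψ : H →* K) (a : A.obj K) :
    A.map (Biset.res φ) (A.map (Biset.res ψ) a) = A.map (Biset.res (ψ.comp φ)) a :=
  (A.map_map _ _ a).trans (A.map_iso _ _ (Biset.isoGenOf φ ψ (MonoidHom.id K)) a)

/-- Multiplication is restriction along the diagonal of the external product. -/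
lemma mul_eq_res_diag (a b : A.obj G) :
    haveI := A.ring G
    a * b = A.map (Biset.res (diagHom G)) (A.xprod a b) := by
  letI := A.ring G; letI := A.ring (G × G)
  unfold xprod
  rw [A.res_mul, A.res_res, A.res_res]
  have h1 : (MonoidHom.fst G G).comp (diagHom G) = MonoidHom.id G := by
    refine MonoidHom.ext fun x => rfl
  have h2 : (MonoidHom.snd G G).comp (diagHom G) = MonoidHom.id G := by
    refine MonoidHom.ext fun x => rfl
  rw [h1, h2, A.map_res_id, A.map_res_id]

lemma mul_eq_res_diag' (a b : A.obj G) :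
    haveI := A.ring G
    A.map (Biset.res (diagHom G))
      (haveI := A.ring (G × G)
       A.map (Biset.res (MonoidHom.fst G G)) a * A.map (Biset.res (MonoidHom.snd G G)) b)
      = a * b := by
  letI := A.ring G; letI := A.ring (G × G)
  rw [A.res_mul, A.res_res, A.res_res]
  have h1 : (MonoidHom.fst G G).comp (diagHom G) = MonoidHom.id G :=
    MonoidHom.ext fun x => rfl
  have h2 : (MonoidHom.snd G G).comp (diagHom G) = MonoidHom.id G :=
    MonoidHom.ext fun x => rfl
  rw [h1, h2, A.map_res_id, A.map_res_id]

end toolkit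

/-- `s(1) = 1` for an anti-involution. -/
lemma _root_.AntiInvol.app_one {k : Type} [CommRing k] {A : GreenBF k} (s : AntiInvol A)
    (G : Type) [Group G] [Fintype G] :
    s.app G (haveI := A.ring G; (1 : A.obj G)) = haveI := A.ring G; (1 : A.obj G) := by
  letI := A.ring G
  have h : ∀ a : A.obj G, a = s.app G (1 : A.obj G) * a := by
    intro a
    conv_lhs => rw [← s.invol G a, ← mul_one (s.app G a)]
    rw [s.anti, s.invol]
  have h1 := h (1 : A.obj G)
  rw [mul_one] at h1
  exact h1.symm

/-! ### (1) → (2) and (2) → (1) -/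

/-- The Green biset functor morphism `δ = op ∘ ★`. -/
def deltaOfAnti {k : Type} [CommRing k] {A : GreenBF k} (s : AntiInvol A) :
    GreenHom A A.opp where
  app G _ _ a := MulOpposite.op (s.app G a)
  natural X a := congrArg MulOpposite.op (s.natural X a)
  app_add G _ _ a b := by
    letI := A.ring G
    exact congrArg MulOpposite.op (s.app_add G a b)
  app_smul G _ _ c a := by
    letI := A.ring G; letI := A.alg G
    exact congrArg MulOpposite.op (s.app_smul G c a)
  app_mul G _ _ a b := by
    letI := A.ring G
    show MulOpposite.op (s.app G (a * b)) = MulOpposite.op (s.app G a) * MulOpposite.op (s.app G b)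
    rw [s.anti, MulOpposite.op_mul]
  app_one G _ _ := by
    letI := A.ring G
    show MulOpposite.op (s.app G 1) = 1
    rw [s.app_one, MulOpposite.op_one]

/-- The anti-involution `★ = unop ∘ δ`. -/
def antiOfDelta {k : Type} [CommRing k] {A : GreenBF k} (δ : GreenHom A A.opp)
    (hinv : ∀ (G : Type) [Group G] [Fintype G] (a : A.obj G),
      MulOpposite.unop (δ.app G (MulOpposite.unop (δ.app G a))) = a) :
    AntiInvol A where
  app G _ _ a := MulOpposite.unop (δ.app G a)
  natural {G H} _ _ _ _ X a := by
    show MulOpposite.unop (δ.app H (A.map X a)) = A.map X (MulOpposite.unop (δ.app G a))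
    rw [δ.natural]; rfl
  app_add G _ _ a b := by
    letI := A.ring G
    show MulOpposite.unop (δ.app G (a + b))
        = MulOpposite.unop (δ.app G a) + MulOpposite.unop (δ.app G b)
    rw [δ.app_add]; rfl
  app_smul G _ _ c a := by
    letI := A.ring G; letI := A.alg G
    show MulOpposite.unop (δ.app G (c • a)) = c • MulOpposite.unop (δ.app G a)
    rw [δ.app_smul]; rfl
  invol G _ _ a := hinv G a
  anti G _ _ a b := by
    letI := A.ring G
    show MulOpposite.unop (δ.app G (a * b))
        = MulOpposite.unop (δ.app G b) * MulOpposite.unop (δ.app G a)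
    rw [δ.app_mul]; rfl

/-! ### Easy properties of `bull` -/

section bull

variable {k : Type} [CommRing k] {A : GreenBF k} (s : AntiInvol A)
variable {G H K L : Type} [Group G] [Fintype G] [Group H] [Fintype H]
  [Group K] [Fintype K] [Group L] [Fintype L]

lemma bull_bull (α : A.obj (H × G)) : A.bull s (A.bull s α) = α := by
  unfold GreenBF.bull
  rw [s.natural, s.invol]
  exact A.mapIsoB_cancel _ _ (fun p => by simp) α

lemma bull_map (x : Biset (L × K) (H × G)) (α : A.obj (H × G)) :
    A.map (Biset.isoB (MulEquiv.prodComm : K × L ≃* L × K)) (A.bull s (A.map x α)) =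
      A.map x (A.map (Biset.isoB (MulEquiv.prodComm : G × H ≃* H × G)) (A.bull s α)) := by
  unfold GreenBF.bull
  rw [A.mapIsoB_cancel _ _ (fun p => by simp), s.natural,
    A.mapIsoB_cancel _ _ (fun p => by simp)]

lemma bull_catId (G : Type) [Group G] [Fintype G] :
    A.bull s (A.catId G) = A.catId G := by
  unfold GreenBF.bull GreenBF.catId
  rw [s.natural]
  have h1 : s.app PUnit A.one1 = A.one1 := s.app_one PUnit
  rw [h1, A.map_isoB_left]
  refine A.map_iso _ _ ?_ A.one1
  refine ⟨Equiv.inv G, ?_⟩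
  intro a x
  change G at x
  show (((MulEquiv.prodComm : G × G ≃* G × G).symm a.1).1 * x *
      ((MulEquiv.prodComm : G × G ≃* G × G).symm a.1).2⁻¹)⁻¹ = a.1.1 * x⁻¹ * a.1.2⁻¹
  simp [mul_assoc]

end bull

end GreenBF


/-! ### Contravariance of `bull` -/

/-- The full swap `(K×H)×(H×G) ≃* (G×H)×(H×K)`. -/
def sigE (K H G : Type) [Group K] [Group H] [Group G] :
    ((K × H) × (H × G)) ≃* ((G × H) × (H × K)) where
  toFun q := ((q.2.2, q.2.1), (q.1.2, q.1.1))
  invFun q := ((q.2.2, q.2.1), (q.1.2, q.1.1))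
  left_inv q := rfl
  right_inv q := rfl
  map_mul' a b := rfl

def contraMainIso (K H G : Type) [Group K] [Group H] [Group G]
    [Finite K] [Finite H] [Finite G] :
    Biset.Iso ((Biset.middle K H G).lmap (MulEquiv.prodComm : K × G ≃* G × K))
      ((Biset.middle G H K).rmapHom (sigE K H G).toMonoidHom) where
  toEquiv :=
  { toFun := fun x => ((show K × H × G from x).2.2⁻¹, (show K × H × G from x).2.1⁻¹,
      (show K × H × G from x).1⁻¹)
    invFun := fun x => ((show G × H × K from x).2.2⁻¹, (show G × H × K from x).2.1⁻¹,
      (show G × H × K from x).1⁻¹)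
    left_inv := fun x => by
      obtain ⟨x1, x2, x3⟩ := (show K × H × G from x)
      simp
      rfl
    right_inv := fun x => by
      obtain ⟨x1, x2, x3⟩ := (show G × H × K from x)
      simp
      rfl }
  equivariant a x := by
    obtain ⟨x1, x2, x3⟩ := (show K × H × G from x)
    simp [Biset.lmap, Biset.rmapHom, Biset.middle, sigE, Prod.ext_iff, mul_assoc, DFunLike.coe, EquivLike.coe]

def factor1Iso (K H G : Type) [Group K] [Group H] [Group G]
    [Finite K] [Finite H] [Finite G] :
    Biset.Iso ((Biset.res (MonoidHom.snd (K × H) (H × G))).lmap (sigE K H G))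
      ((Biset.res (MonoidHom.fst (G × H) (H × K))).rmapHom
        (MulEquiv.prodComm : H × G ≃* G × H).toMonoidHom) where
  toEquiv := Equiv.prodComm H G
  equivariant a x := by
    obtain ⟨x1, x2⟩ := (show H × G from x)
    erw [Equiv.prodComm_apply, Equiv.prodComm_apply]
    simp [Biset.lmap, Biset.rmapHom, Biset.res, Biset.ofHoms, sigE, Prod.ext_iff, mul_assoc]

def factor2Iso (K H G : Type) [Group K] [Group H] [Group G]
    [Finite K] [Finite H] [Finite G] :
    Biset.Iso ((Biset.res (MonoidHom.fst (K × H) (H × G))).lmap (sigE K H G))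
      ((Biset.res (MonoidHom.snd (G × H) (H × K))).rmapHom
        (MulEquiv.prodComm : K × H ≃* H × K).toMonoidHom) where
  toEquiv := Equiv.prodComm K H
  equivariant a x := by
    obtain ⟨x1, x2⟩ := (show K × H from x)
    simp [Biset.lmap, Biset.rmapHom, Biset.res, Biset.ofHoms, sigE, Prod.ext_iff, mul_assoc, DFunLike.coe, EquivLike.coe, Equiv.prodComm]

namespace GreenBF

variable {k : Type} [CommRing k] {A : GreenBF k} (s : AntiInvol A)

lemma bull_pcomp {G H K : Type} [Group G] [Fintype G] [Group H] [Fintype H]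
    [Group K] [Fintype K] (α : A.obj (K × H)) (β : A.obj (H × G)) :
    A.bull s (A.pcomp α β) = A.pcomp (A.bull s β) (A.bull s α) := by
  letI := A.ring ((K × H) × (H × G)); letI := A.ring ((G × H) × (H × K))
  letI := A.ring (K × H); letI := A.ring (H × G)
  letI := A.ring (G × H); letI := A.ring (H × K)
  unfold GreenBF.bull GreenBF.pcomp GreenBF.xprod
  rw [s.natural, A.map_isoB_left, A.map_iso _ _ (contraMainIso K H G),
    ← A.map_isoB_right (Biset.middle G H K) (sigE K H G)]
  congr 1
  rw [s.anti, s.natural, s.natural, A.mapIsoB_mul,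
    A.map_isoB_left (sigE K H G) (Biset.res (MonoidHom.snd (K × H) (H × G))),
    A.map_isoB_left (sigE K H G) (Biset.res (MonoidHom.fst (K × H) (H × G))),
    A.map_iso _ _ (factor1Iso K H G), A.map_iso _ _ (factor2Iso K H G),
    ← A.map_isoB_right _ (MulEquiv.prodComm : H × G ≃* G × H),
    ← A.map_isoB_right _ (MulEquiv.prodComm : K × H ≃* H × K)]

end GreenBF


/-! ### From a duality functor back to an anti-involution -/

def etaE (G : Type) [Group G] : G ≃* G × PUnit where
  toFun g := (g, PUnit.unit)
  invFun p := p.1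
  left_inv g := rfl
  right_inv p := rfl
  map_mul' a b := rfl

def thetaE (G : Type) [Group G] : G ≃* PUnit × G where
  toFun g := (PUnit.unit, g)
  invFun p := p.2
  left_inv g := rfl
  right_inv p := rfl
  map_mul' a b := rfl

def xiHom (G : Type) [Group G] : (G × G) →* ((G × G) × G) where
  toFun v := ((v.1, v.1), v.2)
  map_one' := rfl
  map_mul' a b := rfl

def xiHom' (G : Type) [Group G] : (G × G) →* ((PUnit × G) × (G × G)) where
  toFun v := ((PUnit.unit, v.1), (v.2, v.2))
  map_one' := rfl
  map_mul' a b := rfl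

def muE (H G : Type) [Group H] [Group G] : ((H × G) × G) ≃* ((H × G) × (G × PUnit)) where
  toFun w := (w.1, (w.2, PUnit.unit))
  invFun w := (w.1, w.2.1)
  left_inv w := rfl
  right_inv w := rfl
  map_mul' a b := rfl

namespace GreenBF

variable {k : Type} [CommRing k] (A : GreenBF k)

/-- `A(ã)(b) = a * b`. -/
lemma actOn_tilde {G : Type} [Group G] [Fintype G] (a c : A.obj G) :
    haveI := A.ring G
    A.actOn (A.tilde a) c = a * c := by
  letI := A.ring G; letI := A.ring (G × G); letI := A.ring ((G × G) × G)
  unfold GreenBF.actOn GreenBF.tilde GreenBF.xprod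
  rw [show Biset.ind (diagHom G)
      = Biset.ofHoms (MonoidHom.id (G × G)) (diagHom G) from rfl,
    A.map_map (Biset.res (MonoidHom.fst (G × G) G))
      (Biset.ofHoms (MonoidHom.id (G × G)) (diagHom G)) a,
    A.map_iso _ _ (Biset.isoGenOf (MonoidHom.fst (G × G) G)
      (MonoidHom.id (G × G)) (diagHom G)) a,
    MonoidHom.id_comp]
  rw [← A.map_iso _ _ (Biset.isoIndRes (MonoidHom.fst (G × G) G) (diagHom G)
      (xiHom G) (MonoidHom.fst G G)
      (fun v => rfl)
      (fun m => ⟨(m, 1), 1, by simp [diagHom]⟩)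
      (fun l r hl => ⟨(r, l.2), by
        have h1 : l.1 = (r, r) := hl
        exact ⟨by show ((r, r), l.2) = l; rw [← h1], rfl⟩⟩)) a,
    ← A.map_map (Biset.ind (xiHom G)) (Biset.res (MonoidHom.fst G G)) a,
    A.frob2 (xiHom G) (A.map (Biset.res (MonoidHom.snd (G × G) G)) c)
      (A.map (Biset.res (MonoidHom.fst G G)) a),
    A.res_res (xiHom G) (MonoidHom.snd (G × G) G) c,
    show (MonoidHom.snd (G × G) G).comp (xiHom G) = MonoidHom.snd G G
      from MonoidHom.ext fun x => rfl,
    A.map_map (Biset.half G G) (Biset.ind (xiHom G)),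
    A.map_iso _ _ (Biset.isoCompInd (Biset.half G G) (xiHom G))]
  rw [A.map_iso (X := (Biset.half G G).rmapHom (xiHom G))
      (Y := Biset.res (diagHom G))
      ⟨⟨fun z => ((show G × G from z).1, (show G × G from z).1 * (show G × G from z).2),
        fun w => ((show G × G from w).1, (show G × G from w).1⁻¹ * (show G × G from w).2),
        fun z => by obtain ⟨z1, z2⟩ := (show G × G from z); simp; rfl,
        fun w => by obtain ⟨w1, w2⟩ := (show G × G from w); simp; rfl⟩, ?_⟩]
  · exact A.mul_eq_res_diag' a c
  · intro a0 x0
    obtain ⟨x1, x2⟩ := (show G × G from x0)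
    erw [Equiv.coe_fn_mk]
    simp [Biset.rmapHom, Biset.half, Biset.res, Biset.ofHoms, xiHom, diagHom,
      Prod.ext_iff, mul_assoc]

/-- `α ∘ η_G(c) = η_H(A(α)(c))` : composition with a vector is the action. -/
lemma pcomp_etaE {G H : Type} [Group G] [Fintype G] [Group H] [Fintype H]
    (α : A.obj (H × G)) (c : A.obj G) :
    A.pcomp α (A.map (Biset.isoB (etaE G)) c)
      = A.map (Biset.isoB (etaE H)) (A.actOn α c) := by
  letI := A.ring ((H × G) × G); letI := A.ring ((H × G) × (G × PUnit))
  unfold GreenBF.pcomp GreenBF.actOn GreenBF.xprod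
  rw [A.map_isoB_left (etaE H) (Biset.half H G),
    A.map_isoB_right (Biset.res (MonoidHom.snd (H × G) (G × PUnit))) (etaE G) c]
  rw [← A.map_iso (X := (Biset.res (MonoidHom.fst (H × G) G)).lmap (muE H G))
      (Y := Biset.res (MonoidHom.fst (H × G) (G × PUnit)))
      ⟨Equiv.refl _, by
        intro a0 x0
        simp [Biset.lmap, Biset.res, Biset.ofHoms, muE]
        rfl⟩ α]
  rw [← A.map_iso (X := (Biset.res (MonoidHom.snd (H × G) G)).lmap (muE H G))
      (Y := (Biset.res (MonoidHom.snd (H × G) (G × PUnit))).rmapHom (etaE G).toMonoidHom)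
      ⟨⟨fun x => ((show G from x), PUnit.unit), fun x => (show G × PUnit from x).1,
        fun x => rfl, fun x => rfl⟩, by
        intro a0 x0
        erw [Equiv.coe_fn_mk]
        simp [Biset.lmap, Biset.rmapHom, Biset.res, Biset.ofHoms, muE, etaE,
          Prod.ext_iff]⟩ c]
  rw [← A.map_isoB_left (muE H G) (Biset.res (MonoidHom.fst (H × G) G)) α,
    ← A.map_isoB_left (muE H G) (Biset.res (MonoidHom.snd (H × G) G)) c,
    ← A.mapIsoB_mul,
    A.map_isoB_right (Biset.middle H G PUnit) (muE H G),
    A.map_iso (X := (Biset.middle H G PUnit).rmapHom (muE H G).toMonoidHom)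
      (Y := (Biset.half H G).lmap (etaE H))
      ⟨⟨fun x => ((show H × G × PUnit from x).1, (show H × G × PUnit from x).2.1),
        fun x => ((show H × G from x).1, (show H × G from x).2, PUnit.unit),
        fun x => rfl, fun x => rfl⟩, by
        intro a0 x0
        obtain ⟨x1, x2, x3⟩ := (show H × G × PUnit from x0)
        erw [Equiv.coe_fn_mk]
        simp [Biset.lmap, Biset.rmapHom, Biset.middle, Biset.half, muE, etaE,
          Prod.ext_iff]⟩]

/-- `θ_G(w) ∘ z̃ = θ_G(w * z)`. -/
lemma pcomp_theta_tilde {G : Type} [Group G] [Fintype G] (w z : A.obj G) :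
    A.pcomp (A.map (Biset.isoB (thetaE G)) w) (A.tilde z)
      = A.map (Biset.isoB (thetaE G)) (haveI := A.ring G; w * z) := by
  letI := A.ring G; letI := A.ring (G × G)
  letI := A.ring ((PUnit × G) × (G × G))
  unfold GreenBF.pcomp GreenBF.tilde GreenBF.xprod
  rw [A.map_isoB_right (Biset.res (MonoidHom.fst (PUnit × G) (G × G))) (thetaE G) w]
  rw [A.map_iso (X := (Biset.res (MonoidHom.fst (PUnit × G) (G × G))).rmapHom
        (thetaE G).toMonoidHom)
      (Y := Biset.res ((MonoidHom.snd PUnit G).comp (MonoidHom.fst (PUnit × G) (G × G))))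
      ⟨⟨fun x => (show PUnit × G from x).2, fun x => (PUnit.unit, (show G from x)),
        fun x => rfl, fun x => rfl⟩, by
        intro a0 x0
        erw [Equiv.coe_fn_mk]
        simp [Biset.rmapHom, Biset.res, Biset.ofHoms, thetaE, Prod.ext_iff]
        rfl⟩ w]
  rw [show Biset.ind (diagHom G)
      = Biset.ofHoms (MonoidHom.id (G × G)) (diagHom G) from rfl,
    A.map_map (Biset.res (MonoidHom.snd (PUnit × G) (G × G)))
      (Biset.ofHoms (MonoidHom.id (G × G)) (diagHom G)) z,
    A.map_iso _ _ (Biset.isoGenOf (MonoidHom.snd (PUnit × G) (G × G))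
      (MonoidHom.id (G × G)) (diagHom G)) z,
    MonoidHom.id_comp]
  rw [← A.map_iso _ _ (Biset.isoIndRes (MonoidHom.snd (PUnit × G) (G × G)) (diagHom G)
      (xiHom' G) (MonoidHom.snd G G)
      (fun v => rfl)
      (fun m => ⟨((PUnit.unit, 1), m), 1, by simp [diagHom]⟩)
      (fun l r hl => ⟨(l.1.2, r), by
        have h1 : l.2 = (r, r) := hl
        exact ⟨by show ((PUnit.unit, l.1.2), (r, r)) = l; rw [← h1], rfl⟩⟩)) z,
    ← A.map_map (Biset.ind (xiHom' G)) (Biset.res (MonoidHom.snd G G)) z,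
    A.frob1 (xiHom' G)
      (A.map (Biset.res ((MonoidHom.snd PUnit G).comp (MonoidHom.fst (PUnit × G) (G × G)))) w)
      (A.map (Biset.res (MonoidHom.snd G G)) z),
    A.res_res (xiHom' G) ((MonoidHom.snd PUnit G).comp (MonoidHom.fst (PUnit × G) (G × G))) w,
    show ((MonoidHom.snd PUnit G).comp (MonoidHom.fst (PUnit × G) (G × G))).comp (xiHom' G)
      = MonoidHom.fst G G from MonoidHom.ext fun x => rfl,
    A.map_map (Biset.middle PUnit G G) (Biset.ind (xiHom' G)),
    A.map_iso _ _ (Biset.isoCompInd (Biset.middle PUnit G G) (xiHom' G))]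
  rw [← A.mul_eq_res_diag' w z, A.map_isoB_left (thetaE G) (Biset.res (diagHom G))]
  refine A.map_iso _ _ ⟨⟨fun x => (((show PUnit × G × G from x).2.1 *
      (show PUnit × G × G from x).2.2)⁻¹, ((show PUnit × G × G from x).2.2)⁻¹),
    fun y => (PUnit.unit, ((show G × G from y).1)⁻¹ * (show G × G from y).2,
      ((show G × G from y).2)⁻¹), ?_, ?_⟩, ?_⟩ _
  · intro x
    change PUnit × G × G at x
    obtain ⟨x1, x2, x3⟩ := x
    simp [mul_assoc]
    rfl
  · intro y
    change G × G at y
    obtain ⟨y1, y2⟩ := y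
    simp [mul_assoc]
    rfl
  · intro a0 x0
    change PUnit × G × G at x0
    obtain ⟨x1, x2, x3⟩ := x0
    erw [Equiv.coe_fn_mk]
    simp [Biset.rmapHom, Biset.lmap, Biset.middle, Biset.res, Biset.ofHoms, xiHom',
      thetaE, diagHom, Prod.ext_iff, mul_assoc]

end GreenBF


namespace GreenBF

section ofB

variable {k : Type} [CommRing k] {A : GreenBF k}
variable (b : ∀ (G H : Type) [Group G] [Fintype G] [Group H] [Fintype H],
    A.obj (H × G) → A.obj (G × H))

/-- Condition (b). -/
def BNat : Prop := ∀ (G H K L : Type) [Group G] [Fintype G] [Group H] [Fintype H]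
    [Group K] [Fintype K] [Group L] [Fintype L]
    (x : Biset (L × K) (H × G)) (α : A.obj (H × G)),
  A.map (Biset.isoB (MulEquiv.prodComm : K × L ≃* L × K)) (b K L (A.map x α)) =
    A.map x (A.map (Biset.isoB (MulEquiv.prodComm : G × H ≃* H × G)) (b G H α))

/-- Condition (a). -/
def BInv : Prop := ∀ (G H : Type) [Group G] [Fintype G] [Group H] [Fintype H]
    (α : A.obj (H × G)), b H G (b G H α) = α

/-- Contravariant functoriality. -/
def BComp : Prop := ∀ (G H K : Type) [Group G] [Fintype G] [Group H] [Fintype H]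
    [Group K] [Fintype K] (α : A.obj (K × H)) (β : A.obj (H × G)),
  b G K (A.pcomp α β) = A.pcomp (b G H β) (b H K α)

/-- The candidate anti-involution obtained from a duality functor. -/
def sOfB (G : Type) [Group G] [Fintype G] (a : A.obj G) : A.obj G :=
  A.map (Biset.isoB (etaE G).symm)
    (A.map (Biset.isoB (MulEquiv.prodComm : PUnit × G ≃* G × PUnit))
      (b PUnit G (A.map (Biset.isoB (etaE G)) a)))

lemma etaE_sOfB (G : Type) [Group G] [Fintype G] (a : A.obj G) :
    A.map (Biset.isoB (etaE G)) (sOfB b G a)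
      = A.map (Biset.isoB (MulEquiv.prodComm : PUnit × G ≃* G × PUnit))
          (b PUnit G (A.map (Biset.isoB (etaE G)) a)) := by
  unfold sOfB
  exact A.mapIsoB_cancel _ _ (fun p => (etaE G).apply_symm_apply p) _

lemma b_etaE (G : Type) [Group G] [Fintype G] (a : A.obj G) :
    b PUnit G (A.map (Biset.isoB (etaE G)) a)
      = A.map (Biset.isoB (thetaE G)) (sOfB b G a) := by
  have h := congrArg (A.map (Biset.isoB (MulEquiv.prodComm : G × PUnit ≃* PUnit × G)))
    (etaE_sOfB b G a)
  rw [A.mapIsoB_comp (etaE G) (MulEquiv.prodComm : G × PUnit ≃* PUnit × G) (thetaE G)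
      (fun g => rfl)] at h
  rw [A.mapIsoB_cancel (MulEquiv.prodComm : PUnit × G ≃* G × PUnit)
      (MulEquiv.prodComm : G × PUnit ≃* PUnit × G) (fun p => rfl)] at h
  exact h.symm

lemma sOfB_natural (hnat : BNat b) {G H : Type} [Group G] [Fintype G] [Group H] [Fintype H]
    (X : Biset H G) (a : A.obj G) :
    sOfB b H (A.map X a) = A.map X (sOfB b G a) := by
  have e1 : A.map (Biset.isoB (etaE H)) (A.map X a)
      = A.map ((X.lmap (etaE H)).rmapHom (etaE G).symm.toMonoidHom)
          (A.map (Biset.isoB (etaE G)) a) := by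
    rw [A.map_isoB_right ((X.lmap (etaE H)).rmapHom (etaE G).symm.toMonoidHom) (etaE G),
      A.map_isoB_left (etaE H) X]
    refine (A.map_iso _ _ ⟨Equiv.refl _, ?_⟩ a).symm
    intro a0 x0
    simp [Biset.rmapHom, Biset.lmap, MulEquiv.coe_toMonoidHom, Equiv.refl_apply]
    rfl
  unfold sOfB
  rw [e1, hnat PUnit G PUnit H ((X.lmap (etaE H)).rmapHom (etaE G).symm.toMonoidHom)
      (A.map (Biset.isoB (etaE G)) a)]
  rw [A.map_isoB_left (etaE H).symm ((X.lmap (etaE H)).rmapHom (etaE G).symm.toMonoidHom),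
    A.map_isoB_right X (etaE G).symm]
  refine A.map_iso _ _ ⟨Equiv.refl _, ?_⟩ _
  intro a0 x0
  simp [Biset.rmapHom, Biset.lmap, MulEquiv.coe_toMonoidHom, Equiv.refl_apply]
  rfl

lemma sOfB_invol (hnat : BNat b) (hinv : BInv b) (G : Type) [Group G] [Fintype G]
    (a : A.obj G) : sOfB b G (sOfB b G a) = a := by
  have cc : ∀ u : A.obj (G × PUnit),
      A.map (Biset.isoB (MulEquiv.prodComm : PUnit × G ≃* G × PUnit)) (b PUnit G
        (A.map (Biset.isoB (MulEquiv.prodComm : PUnit × G ≃* G × PUnit)) (b PUnit G u)))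
        = u := by
    intro u
    have h := hnat G PUnit PUnit G
      (Biset.isoB (MulEquiv.prodComm : PUnit × G ≃* G × PUnit)) (b PUnit G u)
    rw [hinv PUnit G u, A.mapIsoB_cancel (MulEquiv.prodComm : G × PUnit ≃* PUnit × G)
        (MulEquiv.prodComm : PUnit × G ≃* G × PUnit) (fun p => rfl)] at h
    exact h
  unfold sOfB
  rw [A.mapIsoB_cancel (etaE G).symm (etaE G) (fun p => (etaE G).apply_symm_apply p),
    cc (A.map (Biset.isoB (etaE G)) a),
    A.mapIsoB_cancel (etaE G) (etaE G).symm (fun g => (etaE.{0} G).symm_apply_apply g)]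

lemma sOfB_tilde (hnat : BNat b) {G : Type} [Group G] [Fintype G] (a : A.obj G) :
    b G G (A.tilde a) = A.tilde (sOfB b G a) := by
  have hy : ∀ u : A.obj G,
      A.map ((Biset.ind (diagHom G)).rmapHom (etaE G).symm.toMonoidHom)
        (A.map (Biset.isoB (etaE G)) u) = A.tilde u := by
    intro u
    rw [A.map_isoB_right ((Biset.ind (diagHom G)).rmapHom (etaE G).symm.toMonoidHom)
      (etaE G) u]
    refine A.map_iso _ _ ⟨Equiv.refl _, ?_⟩ u
    intro a0 x0
    simp [Biset.rmapHom, MulEquiv.coe_toMonoidHom, Equiv.refl_apply]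
    rfl
  have h := hnat PUnit G G G ((Biset.ind (diagHom G)).rmapHom (etaE G).symm.toMonoidHom)
    (A.map (Biset.isoB (etaE G)) a)
  rw [hy a] at h
  rw [← etaE_sOfB b G a, hy (sOfB b G a)] at h
  have h2 := congrArg (A.map (Biset.isoB (MulEquiv.prodComm : G × G ≃* G × G))) h
  rw [A.mapIsoB_cancel (MulEquiv.prodComm : G × G ≃* G × G)
      (MulEquiv.prodComm : G × G ≃* G × G) (fun p => rfl)] at h2
  rw [h2]
  unfold GreenBF.tilde
  rw [A.map_isoB_left (MulEquiv.prodComm : G × G ≃* G × G) (Biset.ind (diagHom G))]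
  refine A.map_iso _ _ ⟨Equiv.prodComm G G, ?_⟩ _
  intro a0 x0
  obtain ⟨x1, x2⟩ := (show G × G from x0)
  erw [Equiv.prodComm_apply, Equiv.prodComm_apply]
  simp [Biset.lmap, Biset.ind, Biset.ofHoms, diagHom, Prod.ext_iff, mul_assoc]

lemma sOfB_anti (hcomp : BComp b) (hnat : BNat b) {G : Type} [Group G] [Fintype G]
    (a₁ a₂ : A.obj G) :
    haveI := A.ring G
    sOfB b G (a₁ * a₂) = sOfB b G a₂ * sOfB b G a₁ := by
  letI := A.ring G
  have step1 : A.map (Biset.isoB (etaE G)) (a₁ * a₂)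
      = A.pcomp (A.tilde a₁) (A.map (Biset.isoB (etaE G)) a₂) := by
    rw [A.pcomp_etaE (A.tilde a₁) a₂, A.actOn_tilde]
  unfold sOfB
  rw [step1, hcomp PUnit G G (A.tilde a₁) (A.map (Biset.isoB (etaE G)) a₂),
    sOfB_tilde b hnat a₁, b_etaE b G a₂, A.pcomp_theta_tilde,
    A.mapIsoB_comp (thetaE G) (MulEquiv.prodComm : PUnit × G ≃* G × PUnit) (etaE G)
      (fun g => rfl),
    A.mapIsoB_cancel (etaE G) (etaE G).symm (fun g => (etaE.{0} G).symm_apply_apply g)]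
  rw [A.mapIsoB_comp (thetaE G) (MulEquiv.prodComm : PUnit × G ≃* G × PUnit) (etaE G)
      (fun g => rfl) (sOfB b G a₂),
    A.mapIsoB_cancel (etaE G) (etaE G).symm (fun g => (etaE.{0} G).symm_apply_apply g)
      (sOfB b G a₂)]
  rfl

/-- Statement (3) implies an anti-involution. -/
def antiOfB
    (hadd : ∀ (G H : Type) [Group G] [Fintype G] [Group H] [Fintype H]
      (α β : A.obj (H × G)),
      haveI := A.ring (H × G); haveI := A.ring (G × H)
      b G H (α + β) = b G H α + b G H β)
    (hsmul : ∀ (G H : Type) [Group G] [Fintype G] [Group H] [Fintype H]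
      (c : k) (α : A.obj (H × G)),
      haveI := A.ring (H × G); haveI := A.alg (H × G)
      haveI := A.ring (G × H); haveI := A.alg (G × H)
      b G H (c • α) = c • b G H α)
    (hcomp : BComp b) (hinv : BInv b) (hnat : BNat b) : AntiInvol A where
  app G _ _ a := sOfB b G a
  natural X a := sOfB_natural b hnat X a
  app_add G _ _ a₁ a₂ := by
    letI := A.ring G
    letI := A.ring (G × PUnit); letI := A.ring (PUnit × G)
    show sOfB b G (a₁ + a₂) = sOfB b G a₁ + sOfB b G a₂
    unfold sOfB
    rw [A.map_add, hadd PUnit G, A.map_add, A.map_add]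
  app_smul G _ _ c a := by
    letI := A.ring G; letI := A.alg G
    letI := A.ring (G × PUnit); letI := A.alg (G × PUnit)
    letI := A.ring (PUnit × G); letI := A.alg (PUnit × G)
    show sOfB b G (c • a) = c • sOfB b G a
    unfold sOfB
    rw [A.map_smul, hsmul PUnit G, A.map_smul, A.map_smul]
  invol G _ _ a := sOfB_invol b hnat hinv G a
  anti G _ _ a₁ a₂ := sOfB_anti b hcomp hnat a₁ a₂

end ofB

section assembly

variable {k : Type} [CommRing k] {A : GreenBF k}

lemma deltaOfAnti_bijective (s : AntiInvol A) (G : Type) [Group G] [Fintype G] :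
    Function.Bijective ((deltaOfAnti s).app G) := by
  constructor
  · intro a c h
    have h2 := congrArg (fun t => s.app G (MulOpposite.unop t)) h
    simpa [deltaOfAnti, s.invol] using h2
  · intro y
    refine ⟨s.app G (MulOpposite.unop y), ?_⟩
    show MulOpposite.op (s.app G (s.app G (MulOpposite.unop y))) = y
    rw [s.invol]
    rfl

end assembly

end GreenBF

/-! STATEMENT 10: for a Green biset functor `A`, the following are equivalent:
(1) there is an anti-involution `★` on `A`;
(2) there is an isomorphism of Green biset functors `δ : A → A^op` with
    `δ^op = δ⁻¹`;
(3) there is a `k`-linear functor `• : P_A → (P_A)^op`, the identity on objects,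
    contravariant on hom-sets, with `(•)^op ∘ • = Id` and such that `T⁻¹ ∘ •`
    commutes with all biset operations. -/
theorem statement10 (k : Type) [CommRing k] (A : GreenBF k) :
    ((Nonempty (AntiInvol A)) ↔
      (∃ δ : GreenHom A A.opp,
        (∀ (G : Type) [Group G] [Fintype G], Function.Bijective (δ.app G)) ∧
        (∀ (G : Type) [Group G] [Fintype G] (a : A.obj G),
          MulOpposite.unop (δ.app G (MulOpposite.unop (δ.app G a))) = a)))
    ∧ ((∃ δ : GreenHom A A.opp,
        (∀ (G : Type) [Group G] [Fintype G], Function.Bijective (δ.app G)) ∧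
        (∀ (G : Type) [Group G] [Fintype G] (a : A.obj G),
          MulOpposite.unop (δ.app G (MulOpposite.unop (δ.app G a))) = a)) ↔
      (∃ b : ∀ (G H : Type) [Group G] [Fintype G] [Group H] [Fintype H],
            A.obj (H × G) → A.obj (G × H),
        -- k-linearity
        (∀ (G H : Type) [Group G] [Fintype G] [Group H] [Fintype H]
            (α β : A.obj (H × G)),
          haveI := A.ring (H × G); haveI := A.ring (G × H)
          b G H (α + β) = b G H α + b G H β) ∧
        (∀ (G H : Type) [Group G] [Fintype G] [Group H] [Fintype H]
            (c : k) (α : A.obj (H × G)),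
          haveI := A.ring (H × G); haveI := A.alg (H × G)
          haveI := A.ring (G × H); haveI := A.alg (G × H)
          b G H (c • α) = c • b G H α) ∧
        -- contravariant functoriality (functor to the opposite category)
        (∀ (G H K : Type) [Group G] [Fintype G] [Group H] [Fintype H]
            [Group K] [Fintype K] (α : A.obj (K × H)) (β : A.obj (H × G)),
          b G K (A.pcomp α β) = A.pcomp (b G H β) (b H K α)) ∧
        (∀ (G : Type) [Group G] [Fintype G], b G G (A.catId G) = A.catId G) ∧
        -- (a) : (•)^op ∘ • = Id
        (∀ (G H : Type) [Group G] [Fintype G] [Group H] [Fintype H]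
            (α : A.obj (H × G)), b H G (b G H α) = α) ∧
        -- (b) : T⁻¹ ∘ • commutes with biset operations
        (∀ (G H K L : Type) [Group G] [Fintype G] [Group H] [Fintype H]
            [Group K] [Fintype K] [Group L] [Fintype L]
            (x : Biset (L × K) (H × G)) (α : A.obj (H × G)),
          A.map (Biset.isoB (MulEquiv.prodComm : K × L ≃* L × K)) (b K L (A.map x α)) =
            A.map x (A.map (Biset.isoB (MulEquiv.prodComm : G × H ≃* H × G)) (b G H α))))) := by
  constructor
  · constructor
    · rintro ⟨s⟩
      exact ⟨GreenBF.deltaOfAnti s, fun G _ _ => GreenBF.deltaOfAnti_bijective s G,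
        fun G _ _ a => s.invol G a⟩
    · rintro ⟨δ, hbij, hinv⟩
      exact ⟨GreenBF.antiOfDelta δ hinv⟩
  · constructor
    · rintro ⟨δ, hbij, hinv⟩
      have s := GreenBF.antiOfDelta δ hinv
      refine ⟨fun G H _ _ _ _ α => A.bull s α, ?_, ?_, ?_, ?_, ?_, ?_⟩
      · intro G H _ _ _ _ α β
        letI := A.ring (H × G); letI := A.ring (G × H)
        dsimp only
        unfold GreenBF.bull
        rw [s.app_add, A.map_add]
      · intro G H _ _ _ _ c α
        letI := A.ring (H × G); letI := A.alg (H × G)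
        letI := A.ring (G × H); letI := A.alg (G × H)
        dsimp only
        unfold GreenBF.bull
        rw [s.app_smul, A.map_smul]
      · intro G H K _ _ _ _ _ _ α β
        exact GreenBF.bull_pcomp s α β
      · intro G _ _
        exact GreenBF.bull_catId s G
      · intro G H _ _ _ _ α
        exact GreenBF.bull_bull s α
      · intro G H K L _ _ _ _ _ _ _ _ x α
        exact GreenBF.bull_map s x α
    · rintro ⟨b, hadd, hsmul, hcomp, hid, hinva, hnat⟩
      have s := GreenBF.antiOfB b hadd hsmul hcomp hinva hnat
      exact ⟨GreenBF.deltaOfAnti s, fun G _ _ => GreenBF.deltaOfAnti_bijective s G,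
        fun G _ _ a => s.invol G a⟩
end

section
/- Let A be a ★-Green biset functor with duality • = T ∘ P_δ on P_A. Then for every a ∈ A(G): (a★)~ = (ã)•, i.e. the tilde map A(G) → End_{P_A}(G) intertwines the anti-involution ★ with the duality • on endomorphisms. The key biset fact is Iso(τ_{G,G}) ∘ Ind(Δ_G) ≅ Ind(Δ_G) as (G×G, G)-bisets. -/
set_option autoImplicit false
set_option maxHeartbeats 400000

namespace Biset

variable {G H K : Type} [Group G] [Group H] [Group K] [Finite H] [Finite K]

/-- Transitivity of induction: `Ind(ψ) ∘ Ind(φ) ≅ Ind(ψ ∘ φ)`, via `[k, h] ↦ k · ψ(h)`. -/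
def indCompInd (ψ : H →* K) (φ : G →* H) :
    Iso ((ind ψ).comp (ind φ)) (ind (ψ.comp φ)) where
  toEquiv :=
    { toFun := Quot.lift (fun p : K × H => p.1 * ψ p.2) <| by
        rintro (⟨k, h⟩ : K × H) (⟨k', h'⟩ : K × H) ⟨u, hk, hh⟩
        change k' = 1 * k * (ψ u)⁻¹ at hk
        change h' = u * h * (φ 1)⁻¹ at hh
        change k * ψ h = k' * ψ h'
        simp [hk, hh, mul_assoc]
      invFun := fun k : K => Quot.mk _ (k, (1 : H))
      left_inv q := Quot.inductionOn q fun p : K × H => by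
        exact Quot.sound ⟨p.2, show p.1 = 1 * (p.1 * ψ p.2) * (ψ p.2)⁻¹ by simp,
          show p.2 = p.2 * 1 * (φ 1)⁻¹ by simp⟩
      right_inv := fun k : K => show k * ψ 1 = k by simp }
  equivariant a q := Quot.inductionOn q fun p : K × H => by
    show a.1 * p.1 * (ψ 1)⁻¹ * ψ (1 * p.2 * (φ a.2)⁻¹) =
      a.1 * (p.1 * ψ p.2) * ((ψ.comp φ) a.2)⁻¹
    simp [mul_assoc]

end Biset

theorem prodComm_comp_diagHom (G : Type) [Group G] :
    (MulEquiv.prodComm : G × G ≃* G × G).toMonoidHom.comp (diagHom G) = diagHom G :=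
  rfl

namespace GreenBF

variable {k : Type} [CommRing k]

theorem map_ind_map_ind (A : GreenBF k) {G H K : Type} [Group G] [Fintype G] [Group H]
    [Fintype H] [Group K] [Fintype K] (ψ : H →* K) (φ : G →* H) (a : A.obj G) :
    A.map (Biset.ind ψ) (A.map (Biset.ind φ) a) = A.map (Biset.ind (ψ.comp φ)) a := by
  rw [← A.map_comp, A.map_iso _ _ (Biset.indCompInd ψ φ)]

end GreenBF

theorem statement11 (k : Type) [CommRing k] (A : GreenBF k) (s : AntiInvol A)
    (G : Type) [Group G] [Fintype G] :
    (∀ a : A.obj G, A.tilde (s.app G a) = A.bull s (A.tilde a))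
    ∧ Nonempty (Biset.Iso
        ((Biset.isoB (MulEquiv.prodComm : G × G ≃* G × G)).comp
          (Biset.ind (diagHom G)))
        (Biset.ind (diagHom G))) := by
  refine ⟨fun a => ?_, ⟨prodComm_comp_diagHom G ▸ Biset.indCompInd _ _⟩⟩
  rw [GreenBF.tilde, GreenBF.bull, GreenBF.tilde, s.natural, Biset.isoB,
    A.map_ind_map_ind, prodComm_comp_diagHom]
end

section
/- Let A be a ★-Green biset functor and φ: G → H a group homomorphism between objects. Then A(Res(φ)) restricts to a group homomorphism A(H)^{×,⊥} → A(G)^{×,⊥} on orthogonal units. If moreover φ is surjective, then A(Res(φ)) is injective, and any unit u ∈ A(H)^× with A(Res(φ))(u) orthogonal is itself orthogonal. -/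
set_option autoImplicit false
set_option maxHeartbeats 400000

namespace Biset

variable {G H : Type} [Group G] [Group H] [Finite H]

/-- The isomorphism is `[(y, x)] ↦ y * x`; surjectivity of `φ` makes `h ↦ [(h, 1)]` its inverse,
since `[(y, φ g)] = [(y * φ g, 1)]`. -/
def indCompResIso (φ : G →* H) (hφ : Function.Surjective φ) :
    Iso ((ind φ).comp (res φ)) (idB H) where
  toEquiv :=
    { toFun := Quot.lift (fun p : H × H => p.1 * p.2) <| by
        rintro ⟨(y : H), (x : H)⟩ ⟨y', x'⟩ ⟨g, rfl, rfl⟩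
        change y * x = 1 * y * (φ g)⁻¹ * (φ g * x * 1⁻¹)
        group
      invFun := fun h : H => Quot.mk _ ((h, 1) : H × H)
      left_inv := fun q => Quot.inductionOn q <| by
        rintro ⟨(y : H), (x : H)⟩
        obtain ⟨g, rfl⟩ := hφ x
        refine Quot.sound ⟨g, ?_, ?_⟩
        · change y = 1 * (y * φ g) * (φ g)⁻¹
          group
        · change φ g = φ g * 1 * 1⁻¹
          group
      right_inv := mul_one (M := H) }
  equivariant a q := Quot.inductionOn q <| by
    rintro ⟨(y : H), (x : H)⟩
    change a.1 * y * (φ 1)⁻¹ * (φ 1 * x * a.2⁻¹) = a.1 * (y * x) * a.2⁻¹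
    simp [mul_assoc]

end Biset

namespace GreenBF

attribute [local instance] GreenBF.ring

variable {k : Type} [CommRing k] (A : GreenBF k) {G H : Type} [Group G] [Fintype G]
  [Group H] [Fintype H]

def resRingHom (φ : G →* H) : A.obj H →+* A.obj G where
  toFun := A.map (Biset.res φ)
  map_one' := A.res_one φ
  map_mul' := A.res_mul φ
  map_zero' := by simpa using A.map_add (Biset.res φ) 0 0
  map_add' := A.map_add (Biset.res φ)

def resUnits (φ : G →* H) : (A.obj H)ˣ →* (A.obj G)ˣ :=
  Units.map (A.resRingHom φ).toMonoidHom

theorem map_ind_map_res_of_surjective {φ : G →* H} (hφ : Function.Surjective φ)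
    (a : A.obj H) : A.map (Biset.ind φ) (A.map (Biset.res φ) a) = a := by
  rw [← A.map_comp, A.map_iso _ _ (Biset.indCompResIso φ hφ), A.map_id]

theorem map_res_injective_of_surjective {φ : G →* H} (hφ : Function.Surjective φ) :
    Function.Injective (A.map (Biset.res φ)) :=
  Function.LeftInverse.injective (A.map_ind_map_res_of_surjective hφ)

variable {A}

def IsOrthogonal (s : AntiInvol A) (u : (A.obj G)ˣ) : Prop :=
  s.app G u = ↑u⁻¹

theorem IsOrthogonal.resUnits {s : AntiInvol A} {u : (A.obj H)ˣ} (hu : IsOrthogonal s u)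
    (φ : G →* H) : IsOrthogonal s (A.resUnits φ u) :=
  (s.natural _ _).trans (congrArg _ hu)

theorem IsOrthogonal.of_resUnits {s : AntiInvol A} {u : (A.obj H)ˣ} {φ : G →* H}
    (hφ : Function.Surjective φ) (hu : IsOrthogonal s (A.resUnits φ u)) :
    IsOrthogonal s u :=
  A.map_res_injective_of_surjective hφ ((s.natural _ _).symm.trans hu)

end GreenBF

theorem statement15 (k : Type) [CommRing k] (A : GreenBF k) (s : AntiInvol A)
    (G H : Type) [Group G] [Fintype G] [Group H] [Fintype H] (φ : G →* H) :
    haveI := A.ring G; haveI := A.ring H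
    (∀ u : (A.obj H)ˣ, s.app H ↑u = ↑u⁻¹ →
      (A.map (Biset.res φ) ↑u * A.map (Biset.res φ) (↑u⁻¹ : A.obj H) = 1
        ∧ A.map (Biset.res φ) (↑u⁻¹ : A.obj H) * A.map (Biset.res φ) ↑u = 1
        ∧ s.app G (A.map (Biset.res φ) ↑u) = A.map (Biset.res φ) (↑u⁻¹ : A.obj H)))
    ∧ (Function.Surjective φ →
        (Function.Injective (fun a : A.obj H => A.map (Biset.res φ) a)
          ∧ ∀ u : (A.obj H)ˣ,
            s.app G (A.map (Biset.res φ) ↑u) = A.map (Biset.res φ) (↑u⁻¹ : A.obj H) →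
              s.app H ↑u = ↑u⁻¹)) :=
  let _ := A.ring G; let _ := A.ring H
  ⟨fun u hu => ⟨(A.resUnits φ u).mul_inv, (A.resUnits φ u).inv_mul,
      GreenBF.IsOrthogonal.resUnits (s := s) hu φ⟩,
    fun hφ => ⟨A.map_res_injective_of_surjective hφ,
      fun _ hu => GreenBF.IsOrthogonal.of_resUnits hφ hu⟩⟩
end
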